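/- Let A be an N×N primitive nonnegative matrix with Perron–Frobenius eigenvalue λ, fix a state k, and let B be the matrix obtained from A by replacing the k-th row and the k-th column by zeroes. Then for all states i, j, the sequence λ^{−n}(B^n)(i,j) tends to 0 as n → ∞. -/

import Mathlib

/-!
With `C = λ⁻¹ • B` and `D = λ⁻¹ • A` we have `0 ≤ C ≤ D` entrywise and `u ᵥ* D = u`. The `k`-th row
of `C ^ m` vanishes while every entry of `D ^ m` is positive, so `u ᵥ* C ^ m < u` entrywise and
hence `u ᵥ* C ^ m ≤ θ • u` for some `θ < 1`. Together with `u ᵥ* C ≤ u` this gives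
`u ᵥ* C ^ n ≤ θ ^ (n / m) • u`, and since `u` is positive, every entry of `C ^ n` tends to `0`.
-/

open Filter Topology

lemma exists_lt_one_le_smul_of_lt {ι : Type*} [Finite ι] {u v : ι → ℝ} (hvu : ∀ i, v i < u i) :
    ∃ θ : ℝ, 0 ≤ θ ∧ θ < 1 ∧ v ≤ θ • u := by
  have hnear : ∀ᶠ θ in 𝓝 (1 : ℝ), ∀ i, v i < θ * u i :=
    eventually_all.2 fun i =>
      (tendsto_id.mul_const (u i)).eventually_const_lt (by simpa using hvu i)
  obtain ⟨θ, hθ, hθ01⟩ :=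
    ((hnear.filter_mono nhdsWithin_le_nhds).and (Ioo_mem_nhdsLT zero_lt_one)).exists
  exact ⟨θ, hθ01.1.le, hθ01.2, fun i => (hθ i).le⟩

namespace Matrix

variable {ι κ R : Type*} [Fintype ι]

section OrderedSemiring

variable [Semiring R] [PartialOrder R] [IsOrderedRing R]

lemma vecMul_le_vecMul_of_le_of_nonneg {v w : ι → R} {M : Matrix ι κ R} (hvw : v ≤ w)
    (hM : ∀ i j, 0 ≤ M i j) : v ᵥ* M ≤ w ᵥ* M :=
  fun j => Finset.sum_le_sum fun i _ => mul_le_mul_of_nonneg_right (hvw i) (hM i j)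

lemma vecMul_le_vecMul_of_nonneg_of_le {v : ι → R} {M N : Matrix ι κ R} (hv : 0 ≤ v)
    (hMN : ∀ i j, M i j ≤ N i j) : v ᵥ* M ≤ v ᵥ* N :=
  fun j => Finset.sum_le_sum fun i _ => mul_le_mul_of_nonneg_left (hMN i j) (hv i)

variable [DecidableEq ι]

lemma pow_apply_le_pow_apply {M N : Matrix ι ι R} (hM : ∀ i j, 0 ≤ M i j)
    (hMN : ∀ i j, M i j ≤ N i j) (n : ℕ) : ∀ i j, (M ^ n) i j ≤ (N ^ n) i j := by
  induction n with
  | zero => exact fun _ _ => le_rfl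
  | succ n ih =>
    intro i j
    rw [pow_succ, pow_succ, mul_apply, mul_apply]
    exact Finset.sum_le_sum fun l _ => mul_le_mul (ih i l) (hMN l j) (hM l j)
      ((pow_apply_nonneg hM n i l).trans (ih i l))

lemma vecMul_pow_le_pow_smul {M : Matrix ι ι R} {u : ι → R} {θ : R} (hM : ∀ i j, 0 ≤ M i j)
    (hθ : 0 ≤ θ) (h : u ᵥ* M ≤ θ • u) (q : ℕ) : u ᵥ* M ^ q ≤ θ ^ q • u := by
  induction q with
  | zero => simp
  | succ q ih =>
    calc u ᵥ* M ^ (q + 1) = (u ᵥ* M ^ q) ᵥ* M := by rw [pow_succ, vecMul_vecMul]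
      _ ≤ (θ ^ q • u) ᵥ* M := vecMul_le_vecMul_of_le_of_nonneg ih hM
      _ = θ ^ q • (u ᵥ* M) := smul_vecMul _ _ _
      _ ≤ θ ^ q • θ • u := smul_le_smul_of_nonneg_left h (pow_nonneg hθ q)
      _ = θ ^ (q + 1) • u := by rw [smul_smul, pow_succ]

/-- Along multiples of `m` the bound decays like `θ ^ q`; the remaining `n % m` steps do not
increase `u`, since `u ᵥ* M ≤ u`. -/
lemma vecMul_pow_le_pow_div_smul {M : Matrix ι ι R} {u : ι → R} {θ : R} {m : ℕ}
    (hM : ∀ i j, 0 ≤ M i j) (hθ : 0 ≤ θ) (hu : u ᵥ* M ≤ u) (hm : u ᵥ* M ^ m ≤ θ • u)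
    (n : ℕ) : u ᵥ* M ^ n ≤ θ ^ (n / m) • u :=
  calc u ᵥ* M ^ n = (u ᵥ* (M ^ m) ^ (n / m)) ᵥ* M ^ (n % m) := by
        rw [vecMul_vecMul, ← pow_mul, ← pow_add, Nat.div_add_mod]
    _ ≤ (θ ^ (n / m) • u) ᵥ* M ^ (n % m) :=
        vecMul_le_vecMul_of_le_of_nonneg
          (vecMul_pow_le_pow_smul (pow_apply_nonneg hM m) hθ hm _) (pow_apply_nonneg hM _)
    _ = θ ^ (n / m) • (u ᵥ* M ^ (n % m)) := smul_vecMul _ _ _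
    _ ≤ θ ^ (n / m) • u := by
        refine smul_le_smul_of_nonneg_left ?_ (pow_nonneg hθ _)
        simpa using vecMul_pow_le_pow_smul hM zero_le_one (by simpa using hu) (n % m)

end OrderedSemiring

lemma pow_apply_eq_zero_of_row_eq_zero [DecidableEq ι] [Semiring R] {M : Matrix ι ι R} {k : ι}
    (hk : ∀ j, M k j = 0) {n : ℕ} (hn : n ≠ 0) (j : ι) : (M ^ n) k j = 0 := by
  obtain ⟨n, rfl⟩ := Nat.exists_eq_succ_of_ne_zero hn
  rw [pow_succ', mul_apply]
  exact Finset.sum_eq_zero fun l _ => by rw [hk l, zero_mul]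

lemma vecMul_pow_eq_of_vecMul_eq [DecidableEq ι] [Semiring R] {M : Matrix ι ι R} {u : ι → R}
    (h : u ᵥ* M = u) (n : ℕ) : u ᵥ* M ^ n = u := by
  induction n with
  | zero => simp
  | succ n ih => rw [pow_succ, ← vecMul_vecMul, ih, h]

lemma vecMul_apply_lt_of_row_eq_zero [Semiring R] [PartialOrder R] [IsStrictOrderedRing R]
    {v : ι → R} {M N : Matrix ι κ R} (hv : 0 ≤ v) (hMN : ∀ i j, M i j ≤ N i j) {k : ι}
    (hvk : 0 < v k) (hMk : ∀ j, M k j = 0) (hNk : ∀ j, 0 < N k j) (j : κ) :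
    (v ᵥ* M) j < (v ᵥ* N) j :=
  Finset.sum_lt_sum (fun i _ => mul_le_mul_of_nonneg_left (hMN i j) (hv i))
    ⟨k, Finset.mem_univ k, show v k * M k j < v k * N k j by
      rw [hMk, mul_zero]; exact mul_pos hvk (hNk j)⟩

section Real

variable [DecidableEq ι]

lemma tendsto_vecMul_pow_nhds_zero {M : Matrix ι ι ℝ} {u : ι → ℝ} {θ : ℝ} {m : ℕ}
    (hM : ∀ i j, 0 ≤ M i j) (hu_nonneg : 0 ≤ u) (hθ : 0 ≤ θ) (hθ1 : θ < 1) (hm : m ≠ 0)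
    (hu : u ᵥ* M ≤ u) (hum : u ᵥ* M ^ m ≤ θ • u) (j : ι) :
    Tendsto (fun n => (u ᵥ* M ^ n) j) atTop (𝓝 0) := by
  have hθpow : Tendsto (fun n => θ ^ (n / m) * u j) atTop (𝓝 0) := by
    simpa using ((tendsto_pow_atTop_nhds_zero_of_lt_one hθ hθ1).comp
      (Nat.tendsto_div_const_atTop hm)).mul_const (u j)
  exact tendsto_of_tendsto_of_tendsto_of_le_of_le tendsto_const_nhds hθpow
    (fun n => Finset.sum_nonneg fun i _ => mul_nonneg (hu_nonneg i) (pow_apply_nonneg hM n i j))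
    (fun n => vecMul_pow_le_pow_div_smul hM hθ hu hum n j)

/-- A positive weight vector controls every entry: `u i * (M ^ n) i j ≤ (u ᵥ* M ^ n) j`. -/
lemma tendsto_pow_apply_nhds_zero_of_vecMul {M : Matrix ι ι ℝ} {u : ι → ℝ}
    (hM : ∀ i j, 0 ≤ M i j) (hu : ∀ i, 0 < u i)
    (h : ∀ j, Tendsto (fun n => (u ᵥ* M ^ n) j) atTop (𝓝 0)) (i j : ι) :
    Tendsto (fun n => (M ^ n) i j) atTop (𝓝 0) := by
  have hle : ∀ n, (M ^ n) i j ≤ (u ᵥ* M ^ n) j / u i := fun n => by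
    rw [le_div_iff₀' (hu i)]
    exact Finset.single_le_sum (f := fun a => u a * (M ^ n) a j)
      (fun a _ => mul_nonneg (hu a).le (pow_apply_nonneg hM n a j)) (Finset.mem_univ i)
  exact tendsto_of_tendsto_of_tendsto_of_le_of_le tendsto_const_nhds
    (by simpa using (h j).div_const (u i)) (fun n => pow_apply_nonneg hM n i j) hle

end Real

end Matrix

open Matrix

theorem inv_pow_mul_zeroed_matrix_pow_tendsto_zero_general
    {N : ℕ} (A : Matrix (Fin N) (Fin N) ℝ)
    (hA_nonneg : ∀ i j, 0 ≤ A i j)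
    (hA_prim : ∃ m : ℕ, 0 < m ∧ ∀ i j, 0 < (A ^ m) i j)
    (lam : ℝ) (u : Fin N → ℝ)
    (hlam_pos : 0 < lam)
    (hu_pos : ∀ i, 0 < u i)
    (hu_eig : ∀ j, ∑ i, u i * A i j = lam * u j)
    (k : Fin N)
    (B : Matrix (Fin N) (Fin N) ℝ)
    (hB : ∀ i j, B i j = if i = k ∨ j = k then 0 else A i j) :
    ∀ i j, Filter.Tendsto (fun n : ℕ => lam⁻¹ ^ n * (B ^ n) i j)
      Filter.atTop (nhds 0) := by
  obtain ⟨m, hm, hAm⟩ := hA_prim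
  set C := lam⁻¹ • B
  set D := lam⁻¹ • A
  have hlam_inv : 0 ≤ lam⁻¹ := inv_nonneg.2 hlam_pos.le
  have hB_nonneg : ∀ a b, 0 ≤ B a b := fun a b => by
    rw [hB]; split_ifs <;> simp [hA_nonneg]
  have hB_le : ∀ a b, B a b ≤ A a b := fun a b => by
    rw [hB]; split_ifs <;> simp [hA_nonneg]
  have hC : ∀ a b, 0 ≤ C a b := fun a b => mul_nonneg hlam_inv (hB_nonneg a b)
  have hCD : ∀ a b, C a b ≤ D a b := fun a b => mul_le_mul_of_nonneg_left (hB_le a b) hlam_inv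
  have hu_nonneg : 0 ≤ u := fun i => (hu_pos i).le
  have huA : u ᵥ* A = lam • u := funext hu_eig
  have huD : u ᵥ* D = u := by
    rw [vecMul_smul, huA, smul_smul, inv_mul_cancel₀ hlam_pos.ne', one_smul]
  have hCk : ∀ j, C k j = 0 := fun j => by simp [C, hB]
  have hlt : ∀ j, (u ᵥ* C ^ m) j < u j := fun j => by
    conv_rhs => rw [← vecMul_pow_eq_of_vecMul_eq huD m]
    refine vecMul_apply_lt_of_row_eq_zero hu_nonneg (pow_apply_le_pow_apply hC hCD m)
      (hu_pos k) (pow_apply_eq_zero_of_row_eq_zero hCk hm.ne') ?_ j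
    intro b
    simpa [D, smul_pow] using mul_pos (pow_pos (inv_pos.2 hlam_pos) m) (hAm k b)
  obtain ⟨θ, hθ, hθ1, hCm⟩ := exists_lt_one_le_smul_of_lt hlt
  have hCu : u ᵥ* C ≤ u := (vecMul_le_vecMul_of_nonneg_of_le hu_nonneg hCD).trans_eq huD
  intro i j
  simpa [C, smul_pow] using tendsto_pow_apply_nhds_zero_of_vecMul hC hu_pos
    (tendsto_vecMul_pow_nhds_zero hC hu_nonneg hθ hθ1 hm.ne' hCu hCm) i j

/-- Let `A` be a primitive nonnegative matrix with Perron–Frobenius eigenvalue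
`lam`, fix a state `k`, and let `B` be the matrix obtained from `A` by filling
with zeroes the `k`-th row and the `k`-th column.  Then for all states `i, j`,
`lam⁻ⁿ (Bⁿ) i j → 0` as `n → ∞`. -/
theorem inv_pow_mul_zeroed_matrix_pow_tendsto_zero
    {N : ℕ} (A : Matrix (Fin N) (Fin N) ℝ)
    (hA_nonneg : ∀ i j, 0 ≤ A i j)
    (hA_prim : ∃ m : ℕ, 0 < m ∧ ∀ i j, 0 < (A ^ m) i j)
    (lam : ℝ) (u : Fin N → ℝ)
    (hlam_pos : 0 < lam)
    (hu_pos : ∀ i, 0 < u i)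
    (hu_sum : ∑ i, u i = 1)
    (hu_eig : ∀ j, ∑ i, u i * A i j = lam * u j)
    (k : Fin N)
    (B : Matrix (Fin N) (Fin N) ℝ)
    (hB : ∀ i j, B i j = if i = k ∨ j = k then 0 else A i j) :
    ∀ i j, Filter.Tendsto (fun n : ℕ => lam⁻¹ ^ n * (B ^ n) i j)
      Filter.atTop (nhds 0) :=
  inv_pow_mul_zeroed_matrix_pow_tendsto_zero_general A hA_nonneg hA_prim lam u hlam_pos hu_pos
    hu_eig k B hB
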